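/- For a permutation σ with saillance composition I = (i₁,...,i_r), the values at positions 1, i₁+1, i₁+i₂+1, ..., i₁+⋯+i_{r-1}+1 are not recoils of σ, hence the number of recoils of σ is at most n − r. -/

import Mathlib

open scoped Classical

/-- A word is *initially dominated* if its first letter is strictly greater
than all subsequent letters. -/
def initiallyDominated (w : List ℕ) : Prop :=
  w ≠ [] ∧ ∀ a ∈ w.tail, a < w.head!

/-- Positions (0-indexed) of the left-to-right maxima of a word. -/
def lrMaxPositions (w : List ℕ) : List ℕ :=
  (List.range w.length).filter (fun i => decide (∀ j < i, w[j]! < w[i]!))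

/-- The saillance composition of a word: gaps between consecutive
left-to-right maxima positions. -/
def SC (w : List ℕ) : List ℕ :=
  List.zipWith (fun a b => a - b) ((lrMaxPositions w).tail ++ [w.length]) (lrMaxPositions w)

/-- The word (one-line notation, values in {1,…,n}) of a permutation of {1,…,n}. -/
def permWord {n : ℕ} (σ : Equiv.Perm (Fin n)) : List ℕ :=
  List.ofFn (fun i => (σ i : ℕ) + 1)

/-- The set of recoils of a permutation: values `v ∈ {1,…,n−1}` such that
`v+1` appears to the left of `v` in the word of `σ`. -/
def recoilSet {n : ℕ} (σ : Equiv.Perm (Fin n)) : Finset ℕ :=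
  (Finset.Icc 1 (n - 1)).filter
    (fun v => (permWord σ).idxOf (v + 1) < (permWord σ).idxOf v)

section LeftToRightMaxima

variable {w : List ℕ}

theorem mem_lrMaxPositions {i : ℕ} :
    i ∈ lrMaxPositions w ↔ i < w.length ∧ ∀ j < i, w[j]! < w[i]! := by
  simp [lrMaxPositions]

theorem lrMaxPositions_pairwise_lt : (lrMaxPositions w).Pairwise (· < ·) :=
  List.pairwise_lt_range.sublist List.filter_sublist

theorem lrMaxPositions_getElem_zero (h : 0 < (lrMaxPositions w).length) :
    (lrMaxPositions w)[0] = 0 := by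
  obtain ⟨m, hm⟩ : ∃ m, w.length = m + 1 := by
    have := (mem_lrMaxPositions.1 (List.getElem_mem h)).1
    exact ⟨w.length - 1, by omega⟩
  simp only [lrMaxPositions, hm, List.range_succ_eq_map]
  rw [List.getElem_of_eq (List.filter_cons_of_pos (by simp))]
  rfl

/-- A left-to-right maximum `w[p]` is larger than everything before it, so `w[p] + 1` cannot
occur before it. -/
theorem not_idxOf_succ_lt_idxOf_of_mem_lrMaxPositions (hw : w.Nodup) {p : ℕ}
    (hp : p ∈ lrMaxPositions w) :
    ¬ w.idxOf (w[p]! + 1) < w.idxOf w[p]! := by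
  obtain ⟨hpw, hmax⟩ := mem_lrMaxPositions.1 hp
  rw [getElem!_pos w p hpw, hw.idxOf_getElem p hpw]
  intro hq
  have hqw : w.idxOf (w[p] + 1) < w.length := hq.trans hpw
  have := hmax _ hq
  rw [getElem!_pos w _ hqw, getElem!_pos w p hpw, List.getElem_idxOf hqw] at this
  omega

end LeftToRightMaxima

theorem sum_take_zipWith_sub_add_head {L : List ℕ} (m : ℕ) (hL : L.Pairwise (· ≤ ·))
    {k : ℕ} (hk : k < L.length) :
    ((List.zipWith (· - ·) (L.tail ++ [m]) L).take k).sum + L[0] = L[k] := by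
  induction k with
  | zero => simp
  | succ k ih =>
    have hk' : k < L.length := by omega
    have hlen : k < (List.zipWith (· - ·) (L.tail ++ [m]) L).length := by
      simp only [List.length_zipWith, List.length_append, List.length_tail, List.length_singleton]
      omega
    have hstep : L[k] ≤ L[k + 1] := List.pairwise_iff_getElem.1 hL k (k + 1) hk' hk (by omega)
    rw [List.sum_take_succ _ _ hlen, add_right_comm, ih hk', List.getElem_zipWith,
      List.getElem_append_left (by simp only [List.length_tail]; omega), List.getElem_tail]
    omega

theorem sum_take_SC (w : List ℕ) {k : ℕ} (hk : k < (lrMaxPositions w).length) :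
    ((SC w).take k).sum = (lrMaxPositions w)[k] := by
  have := sum_take_zipWith_sub_add_head w.length
    (lrMaxPositions_pairwise_lt.imp le_of_lt) hk
  rwa [lrMaxPositions_getElem_zero (by omega), add_zero] at this

theorem length_SC (w : List ℕ) : (SC w).length = (lrMaxPositions w).length := by
  simp only [SC, List.length_zipWith, List.length_append, List.length_tail,
    List.length_singleton]
  omega

section Permutations

variable {n : ℕ} (σ : Equiv.Perm (Fin n))

theorem length_permWord : (permWord σ).length = n := by
  simp [permWord]

theorem nodup_permWord : (permWord σ).Nodup :=
  List.nodup_ofFn.2 fun i j hij => σ.injective (Fin.ext (by simpa using hij))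

theorem mem_Icc_of_mem_permWord {a : ℕ} (ha : a ∈ permWord σ) : a ∈ Finset.Icc 1 n := by
  obtain ⟨i, rfl⟩ := List.mem_ofFn.1 ha
  simp only [Finset.mem_Icc]
  omega

theorem recoilSet_subset_Icc : recoilSet σ ⊆ Finset.Icc 1 n := fun v hv => by
  simp only [recoilSet, Finset.mem_filter, Finset.mem_Icc] at hv ⊢
  omega

theorem getElem!_notMem_recoilSet_of_mem_lrMaxPositions {p : ℕ}
    (hp : p ∈ lrMaxPositions (permWord σ)) : (permWord σ)[p]! ∉ recoilSet σ := fun hrec =>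
  not_idxOf_succ_lt_idxOf_of_mem_lrMaxPositions (nodup_permWord σ) hp
    (Finset.mem_filter.1 hrec).2

/-- Distinct positions carry distinct values, all in `{1,…,n}`, so positions whose values are
not recoils leave at most `n - #P` values for the recoils. -/
theorem card_recoilSet_le_of_forall_notMem (P : Finset ℕ) (hPn : ∀ p ∈ P, p < n)
    (hP : ∀ p ∈ P, (permWord σ)[p]! ∉ recoilSet σ) :
    (recoilSet σ).card ≤ n - P.card := by
  set w := permWord σ
  have hlen : w.length = n := length_permWord σ
  have hvalues : (P.image (w[·]!)).card = P.card := by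
    refine Finset.card_image_of_injOn fun p hp q hq hpq => ?_
    have hp' : p < w.length := hlen ▸ hPn p hp
    have hq' : q < w.length := hlen ▸ hPn q hq
    simp only [getElem!_pos w p hp', getElem!_pos w q hq'] at hpq
    exact (nodup_permWord σ).getElem_inj_iff.1 hpq
  have hdisj : Disjoint (recoilSet σ) (P.image (w[·]!)) :=
    Finset.disjoint_right.2 fun v hv => by
      obtain ⟨p, hp, rfl⟩ := Finset.mem_image.1 hv
      exact hP p hp
  have hsub : recoilSet σ ∪ P.image (w[·]!) ⊆ Finset.Icc 1 n := by
    refine Finset.union_subset (recoilSet_subset_Icc σ) fun v hv => ?_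
    obtain ⟨p, hp, rfl⟩ := Finset.mem_image.1 hv
    have hp' : p < w.length := hlen ▸ hPn p hp
    rw [getElem!_pos w p hp']
    exact mem_Icc_of_mem_permWord σ (List.getElem_mem hp')
  have := Finset.card_le_card hsub
  rw [Finset.card_union_of_disjoint hdisj, hvalues, Nat.card_Icc] at this
  omega

end Permutations

/-- For `σ` with saillance composition `I = (i₁,…,i_r)`, the values at
positions `1, i₁+1, …, i₁+⋯+i_{r-1}+1` are not recoils; hence `σ` has at
most `n − r` recoils. -/
theorem stmt8 (n : ℕ) (I : List ℕ) (σ : Equiv.Perm (Fin n))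
    (h : SC (permWord σ) = I) :
    (∀ k < I.length, (permWord σ)[(I.take k).sum]! ∉ recoilSet σ) ∧
      (recoilSet σ).card ≤ n - I.length := by
  subst h
  refine ⟨fun k hk => ?_, ?_⟩
  · rw [length_SC] at hk
    rw [sum_take_SC _ hk]
    exact getElem!_notMem_recoilSet_of_mem_lrMaxPositions σ (List.getElem_mem hk)
  · have hcard : (lrMaxPositions (permWord σ)).toFinset.card = (SC (permWord σ)).length := by
      rw [List.toFinset_card_of_nodup lrMaxPositions_pairwise_lt.nodup, length_SC]
    rw [← hcard]
    refine card_recoilSet_le_of_forall_notMem σ _ (fun p hp => ?_) fun p hp =>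
      getElem!_notMem_recoilSet_of_mem_lrMaxPositions σ (List.mem_toFinset.1 hp)
    rw [← length_permWord σ]
    exact (mem_lrMaxPositions.1 (List.mem_toFinset.1 hp)).1
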